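/- arXiv:2310.08422 — 3 statements merged into one kernel-verified Lean document; each statement's English description precedes it below -/
import Mathlib

section
/- (Dujella–Pethő reduction lemma) Let M be a positive integer, let τ be an irrational real number, and let p/q be a convergent of the continued fraction expansion of τ with q > 6M. Let A, B, μ be real numbers with A > 0 and B > 1, and set ε := ‖μq‖ − M·‖τq‖, where ‖X‖ denotes the distance from the real number X to the nearest integer. If ε > 0, then there is no solution in positive integers u, v, w to the inequality 0 < |uτ − v + μ| < A·B^{−w} with u ≤ M and w ≥ log(Aq/ε)/log B. -/
/-- Distance from a real number to the nearest integer. -/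
noncomputable def distNearestInt (X : ℝ) : ℝ := |X - round X|

/-- Dujella–Pethő reduction lemma.  Let `M` be a positive integer, `τ` an
irrational real number and `p / q` a convergent of the continued fraction
expansion of `τ` with `q > 6 M`.  Let `A, B, μ` be real numbers with `A > 0`
and `B > 1`, and set `ε := ‖μ q‖ - M ‖τ q‖`.  If `ε > 0`, then there is no
solution in positive integers `u, v, w` with `u ≤ M` and
`w ≥ log (A q / ε) / log B` to the inequality `0 < |u τ - v + μ| < A B ^ (-w)`. -/
theorem dujella_petho (M : ℕ) (hM : 0 < M) (τ : ℝ) (hτ : Irrational τ)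
    (p q : ℤ) (i : ℕ)
    (hp : (p : ℝ) = (GenContFract.of τ).nums i)
    (hq : (q : ℝ) = (GenContFract.of τ).dens i)
    (hq6M : (q : ℝ) > 6 * M)
    (A B μ : ℝ) (hA : A > 0) (hB : B > 1)
    (ε : ℝ) (hε : ε = distNearestInt (μ * q) - M * distNearestInt (τ * q))
    (hεpos : ε > 0) :
    ¬ ∃ u v w : ℕ, 0 < u ∧ 0 < v ∧ 0 < w ∧ (u : ℕ) ≤ M ∧
      (w : ℝ) ≥ Real.log (A * q / ε) / Real.log B ∧
      0 < |(u : ℝ) * τ - v + μ| ∧ |(u : ℝ) * τ - v + μ| < A * B ^ (-(w : ℤ)) := by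
  rintro ⟨u, v, w, hu, hv, hw, huM, hwlog, habs_pos, habs⟩
  have hB0 : (0:ℝ) < B := lt_trans one_pos hB
  have hq6 : (6:ℝ) < q := by
    have : (6:ℝ) ≤ 6 * M := by
      have : (1:ℝ) ≤ M := by exact_mod_cast hM
      nlinarith
    linarith
  have hqpos : (0:ℝ) < q := by linarith
  -- continued fraction facts
  have hnt : ¬(GenContFract.of τ).TerminatedAt i := by
    intro h
    obtain ⟨x, hx⟩ := (GenContFract.terminates_iff_rat τ).mp ⟨i, h⟩
    exact hτ ⟨x, hx.symm⟩
  have hconv := GenContFract.abs_sub_convs_le (v := τ) (n := i) hnt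
  rw [GenContFract.conv_eq_num_div_den, ← hp, ← hq] at hconv
  have hdmono : (q:ℝ) ≤ (GenContFract.of τ).dens (i + 1) := by
    rw [hq]; exact GenContFract.of_den_mono
  have hd1pos : (0:ℝ) < (GenContFract.of τ).dens (i + 1) := lt_of_lt_of_le hqpos hdmono
  have hkey : |τ * q - p| ≤ 1 / (GenContFract.of τ).dens (i + 1) := by
    have h1 : |τ - p / q| * q ≤ 1 / ((q:ℝ) * (GenContFract.of τ).dens (i + 1)) * q :=
      mul_le_mul_of_nonneg_right hconv hqpos.le
    have h2 : |τ - p / q| * q = |τ * q - p| := by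
      rw [show |τ * (q:ℝ) - p| = |(τ - p / q) * q| by
            rw [show (τ - (p:ℝ) / q) * q = τ * q - p by field_simp],
          abs_mul, abs_of_pos hqpos]
    rw [h2] at h1
    calc |τ * q - p| ≤ 1 / ((q:ℝ) * (GenContFract.of τ).dens (i + 1)) * q := h1
      _ = 1 / (GenContFract.of τ).dens (i + 1) := by field_simp
  have hkey2 : |τ * q - p| < 1 / 2 := by
    have : 1 / (GenContFract.of τ).dens (i + 1) ≤ 1 / (q:ℝ) :=
      one_div_le_one_div_of_le hqpos hdmono
    have : 1 / (q:ℝ) < 1 / 2 := by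
      rw [div_lt_div_iff₀ hqpos (by norm_num)]; linarith
    linarith
  -- p is the nearest integer to τ * q
  have hround : round (τ * q) = p := by
    have h1 : |τ * q - round (τ * q)| ≤ |τ * q - p| := round_le (τ * q) p
    have h2 : |(round (τ * q) : ℝ) - p| < 1 := by
      calc |(round (τ * q) : ℝ) - p|
          ≤ |τ * q - round (τ * q)| + |τ * q - p| := by
            have := abs_sub_abs_le_abs_sub (τ * q - p) (τ * q - (round (τ * q) : ℝ))
            calc |(round (τ * q) : ℝ) - p| = |(τ * q - p) - (τ * q - round (τ * q))| := by
                  ring_nf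
              _ ≤ |τ * q - p| + |τ * q - round (τ * q)| := abs_sub _ _
              _ = |τ * q - round (τ * q)| + |τ * q - p| := by ring
        _ < 1 := by linarith
    have h3 : |round (τ * q) - p| < 1 := by exact_mod_cast (by push_cast; exact h2 : |((round (τ * q) - p : ℤ) : ℝ)| < 1)
    have h4 := abs_lt.mp h3
    omega
  have hdist_eq : distNearestInt (τ * q) = |τ * q - p| := by
    rw [distNearestInt, hround]
  -- bound A * q * B^(-w) ≤ ε
  have hlogB : (0:ℝ) < Real.log B := Real.log_pos hB
  have hAq : (0:ℝ) < A * q / ε := by positivity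
  have hBw : A * q / ε ≤ B ^ w := by
    have h1 : Real.log (A * q / ε) ≤ w * Real.log B := by
      rw [ge_iff_le, div_le_iff₀ hlogB] at hwlog; linarith
    calc A * q / ε = Real.exp (Real.log (A * q / ε)) := (Real.exp_log hAq).symm
      _ ≤ Real.exp ((w:ℝ) * Real.log B) := Real.exp_le_exp.mpr h1
      _ = B ^ w := by rw [Real.exp_nat_mul, Real.exp_log hB0]
  have hBwpos : (0:ℝ) < B ^ w := pow_pos hB0 w
  have hzpow : B ^ (-(w:ℤ)) = (B ^ w)⁻¹ := by
    rw [zpow_neg, zpow_natCast]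
  have hABq : A * B ^ (-(w:ℤ)) * q ≤ ε := by
    rw [hzpow]
    rw [div_le_iff₀ hεpos] at hBw
    calc A * (B ^ w)⁻¹ * q = A * q / B ^ w := by field_simp
      _ ≤ ε := by rw [div_le_iff₀ hBwpos]; linarith
  -- main chain
  set n : ℤ := v * q - u * p with hn
  have hmain : distNearestInt (μ * q) ≤ q * |(u:ℝ) * τ - v + μ| + u * |τ * q - p| := by
    have h0 : distNearestInt (μ * q) ≤ |μ * q - (n:ℝ)| := round_le (μ * q) n
    have h1 : μ * q - (n:ℝ) = q * ((u:ℝ) * τ - v + μ) - u * (τ * q - p) := by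
      push_cast [hn]; ring
    calc distNearestInt (μ * q) ≤ |μ * q - (n:ℝ)| := h0
      _ = |q * ((u:ℝ) * τ - v + μ) - u * (τ * q - p)| := by rw [h1]
      _ ≤ |q * ((u:ℝ) * τ - v + μ)| + |(u:ℝ) * (τ * q - p)| := abs_sub _ _
      _ = q * |(u:ℝ) * τ - v + μ| + u * |τ * q - p| := by
          rw [abs_mul, abs_mul, abs_of_pos hqpos, abs_of_nonneg (by positivity : (0:ℝ) ≤ (u:ℝ))]
  have hq_abs : q * |(u:ℝ) * τ - v + μ| < ε := by
    calc q * |(u:ℝ) * τ - v + μ| < q * (A * B ^ (-(w:ℤ))) :=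
        mul_lt_mul_of_pos_left habs hqpos
      _ = A * B ^ (-(w:ℤ)) * q := by ring
      _ ≤ ε := hABq
  have hu_abs : (u:ℝ) * |τ * q - p| ≤ M * distNearestInt (τ * q) := by
    rw [hdist_eq]
    apply mul_le_mul_of_nonneg_right _ (abs_nonneg _)
    exact_mod_cast huM
  linarith [hmain, hq_abs, hu_abs, hε.ge, hε.le]
end

section
/- Suppose k, n, m are positive integers with k ≥ 150, n > m ≥ 1, a1, a2 ∈ {1,…,9}, and P_k = a1·(10^n−1)/9 − a2·(10^m−1)/9. Then 2n < k + 3; in particular n ≤ k. -/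
/-- The Pell sequence: `P 0 = 0`, `P 1 = 1`, `P (n+2) = 2 * P (n+1) + P n`. -/
def pell : ℕ → ℕ
  | 0 => 0
  | 1 => 1
  | n + 2 => 2 * pell (n + 1) + pell n

lemma pell_upper (j : ℕ) : pell (j + 1) ≤ 3 ^ j ∧ pell (j + 2) ≤ 3 ^ (j + 1) := by
  induction j with
  | zero => simp [pell]
  | succ j ih =>
    obtain ⟨h1, h2⟩ := ih
    refine ⟨h2, ?_⟩
    have hdef : pell (j + 1 + 2) = 2 * pell (j + 2) + pell (j + 1) := rfl
    have h3 : 3 ^ (j + 2) = 9 * 3 ^ j := by ring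
    have h4 : 3 ^ (j + 1) = 3 * 3 ^ j := by ring
    omega

/-- Under the hypotheses of the Pell equation, `2 n < k + 3`; in particular `n ≤ k`. -/
theorem pell_two_n_lt (k n m a1 a2 : ℕ) (hk : 150 ≤ k) (hnm : m < n) (hm : 1 ≤ m)
    (ha11 : 1 ≤ a1) (ha19 : a1 ≤ 9) (ha21 : 1 ≤ a2) (ha29 : a2 ≤ 9)
    (heq : (pell k : ℤ) = (a1 : ℤ) * ((10 ^ n - 1) / 9) - (a2 : ℤ) * ((10 ^ m - 1) / 9)) :
    2 * n < k + 3 ∧ n ≤ k := by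
  obtain ⟨e, rfl⟩ : ∃ e, n = e + 2 := ⟨n - 2, by omega⟩
  obtain ⟨j, rfl⟩ : ∃ j, k = j + 1 := ⟨k - 1, by omega⟩
  -- exact division facts
  have h9n : (9 : ℤ) ∣ 10 ^ (e + 2) - 1 := by
    have := sub_dvd_pow_sub_pow (10 : ℤ) 1 (e + 2)
    simpa using this
  have h9m : (9 : ℤ) ∣ 10 ^ m - 1 := by
    have := sub_dvd_pow_sub_pow (10 : ℤ) 1 m
    simpa using this
  have hrn : (9 : ℤ) * ((10 ^ (e + 2) - 1) / 9) = 10 ^ (e + 2) - 1 :=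
    Int.mul_ediv_cancel' h9n
  have hrm : (9 : ℤ) * ((10 ^ m - 1) / 9) = 10 ^ m - 1 :=
    Int.mul_ediv_cancel' h9m
  have h9eq : (9 : ℤ) * pell (j + 1) = (a1 : ℤ) * (10 ^ (e + 2) - 1)
      - (a2 : ℤ) * (10 ^ m - 1) := by
    linear_combination 9 * heq + (a1 : ℤ) * hrn - (a2 : ℤ) * hrm
  -- lower bound: pell k > 10 ^ e
  have h10m : (10 : ℤ) ^ m ≤ 10 ^ (e + 1) :=
    pow_le_pow_right₀ (by norm_num) (by omega)
  have ha1' : (1 : ℤ) ≤ (a1 : ℤ) := by exact_mod_cast ha11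
  have ha2' : (a2 : ℤ) ≤ 9 := by exact_mod_cast ha29
  have hpe : (0 : ℤ) < 10 ^ e := pow_pos (by norm_num) e
  have hpm1 : (1 : ℤ) ≤ 10 ^ m := by have := Nat.one_le_pow m 10 (by norm_num); exact_mod_cast this
  have hlow : (9 : ℤ) * 10 ^ e < 9 * (pell (j + 1) : ℤ) := by
    have hA : (1 : ℤ) * (10 ^ (e + 2) - 1) ≤ (a1 : ℤ) * (10 ^ (e + 2) - 1) := by
      apply mul_le_mul_of_nonneg_right ha1'
      have : (1 : ℤ) ≤ 10 ^ (e + 2) := by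
        have := Nat.one_le_pow (e + 2) 10 (by norm_num); exact_mod_cast this
      linarith
    have hB : (a2 : ℤ) * (10 ^ m - 1) ≤ 9 * (10 ^ (e + 1) - 1) := by
      have h1 : (a2 : ℤ) * (10 ^ m - 1) ≤ 9 * (10 ^ m - 1) := by
        apply mul_le_mul_of_nonneg_right ha2'; linarith
      have h2 : (9 : ℤ) * (10 ^ m - 1) ≤ 9 * (10 ^ (e + 1) - 1) := by linarith
      linarith
    have he2 : (10 : ℤ) ^ (e + 2) = 100 * 10 ^ e := by ring
    have he1 : (10 : ℤ) ^ (e + 1) = 10 * 10 ^ e := by ring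
    linarith [h9eq]
  have hlowN : 10 ^ e < pell (j + 1) := by
    have : (10 : ℤ) ^ e < (pell (j + 1) : ℤ) := by linarith
    exact_mod_cast this
  -- upper bound: pell (j+1) ≤ 3 ^ j
  have hup : pell (j + 1) ≤ 3 ^ j := (pell_upper j).1
  -- square and compare
  have hj : 1 ≤ j := by omega
  have hsq : 10 ^ (2 * e) < 10 ^ j := by
    calc 10 ^ (2 * e) = (10 ^ e) ^ 2 := by rw [← pow_mul, Nat.mul_comm]
    _ < (pell (j + 1)) ^ 2 := Nat.pow_lt_pow_left hlowN (by norm_num)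
    _ ≤ (3 ^ j) ^ 2 := Nat.pow_le_pow_left hup 2
    _ = 9 ^ j := by rw [← pow_mul, Nat.mul_comm, pow_mul]; norm_num
    _ < 10 ^ j := Nat.pow_lt_pow_left (by norm_num) (by omega)
  have h2e : 2 * e < j := by
    exact (Nat.pow_lt_pow_iff_right (by norm_num : 1 < 10)).mp hsq
  omega
end

section
/- Suppose k, n, m are positive integers with k ≥ 150, n > m ≥ 1, a1, a2 ∈ {1,…,9}, and P_k = a1·(10^n−1)/9 − a2·(10^m−1)/9. Then |9·10^{−n}·α^k/(a1·2√2) − 1| ≤ 9.81/10^{n−m}, where α = 1 + √2. -/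
lemma pell_add_two (n : ℕ) : pell (n + 2) = 2 * pell (n + 1) + pell n := rfl

lemma two_mul_sqrt_two_mul_pell (k : ℕ) :
    2 * √2 * (pell k : ℝ) = (1 + √2) ^ k - (1 - √2) ^ k := by
  have hs : √2 ^ 2 = 2 := Real.sq_sqrt zero_le_two
  induction k using Nat.strong_induction_on with
  | _ k ih =>
    match k with
    | 0 => simp [pell]
    | 1 => simp [pell]; ring
    | k + 2 =>
      rw [pell_add_two]
      push_cast
      linear_combination 2 * ih (k + 1) (by omega) + ih k (by omega)
        - ((1 + √2) ^ k - (1 - √2) ^ k) * hs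

lemma abs_one_sub_sqrt_two_pow_div_le (k : ℕ) : |(1 - √2) ^ k / (2 * √2)| ≤ 1 / 2 := by
  have h1 : 1 ≤ √2 := Real.one_le_sqrt.mpr one_le_two
  have h2 : √2 ≤ 2 := by nlinarith [Real.sq_sqrt (zero_le_two : (0 : ℝ) ≤ 2)]
  have hβ : |(1 - √2) ^ k| ≤ 1 := by
    rw [abs_pow]
    exact pow_le_one₀ (abs_nonneg _) (abs_le.mpr ⟨by linarith, by linarith⟩)
  rw [abs_div, abs_of_pos (show (0 : ℝ) < 2 * √2 by positivity), div_le_iff₀ (by positivity)]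
  linarith

lemma Int.sub_one_mul_ediv_pow_sub_one (b : ℤ) (n : ℕ) :
    (b - 1) * ((b ^ n - 1) / (b - 1)) = b ^ n - 1 :=
  Int.mul_ediv_cancel' (sub_one_dvd_pow_sub_one b n)

lemma abs_nine_mul_sub_sub_mul_le {a b e y : ℝ} (ha : 1 ≤ a) (hb₀ : 0 ≤ b) (hb : b ≤ 9)
    (hy : 1 ≤ y) (he : |e| ≤ 1 / 2) : |9 * e - a - b * (y - 1)| ≤ 9 * a * y := by
  rw [abs_le] at he ⊢
  constructor <;> nlinarith

theorem pell_linear_form_bound_one_general (k n m a1 a2 : ℕ) (hnm : m < n)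
    (ha11 : 1 ≤ a1) (ha29 : a2 ≤ 9)
    (heq : (pell k : ℤ) = (a1 : ℤ) * ((10 ^ n - 1) / 9) - (a2 : ℤ) * ((10 ^ m - 1) / 9)) :
    |9 * (10 : ℝ) ^ (-(n : ℤ)) * (1 + Real.sqrt 2) ^ k / ((a1 : ℝ) * (2 * Real.sqrt 2)) - 1| ≤
      9.81 / 10 ^ (n - m) := by
  have h9 : 9 * (pell k : ℝ) = a1 * (10 ^ n - 1) - a2 * (10 ^ m - 1) := by
    have hn : 9 * ((10 ^ n - 1) / 9 : ℤ) = 10 ^ n - 1 := Int.sub_one_mul_ediv_pow_sub_one 10 n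
    have hm : 9 * ((10 ^ m - 1) / 9 : ℤ) = 10 ^ m - 1 := Int.sub_one_mul_ediv_pow_sub_one 10 m
    exact_mod_cast (by linear_combination 9 * heq + a1 * hn - a2 * hm :
      9 * (pell k : ℤ) = a1 * (10 ^ n - 1) - a2 * (10 ^ m - 1))
  have hform : 9 * (10 : ℝ) ^ (-(n : ℤ)) * (1 + √2) ^ k / (a1 * (2 * √2)) - 1
      = (9 * ((1 - √2) ^ k / (2 * √2)) - a1 - a2 * (10 ^ m - 1)) / (a1 * 10 ^ n) := by
    rw [zpow_neg, zpow_natCast]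
    field_simp
    linear_combination -9 * two_mul_sqrt_two_mul_pell k + 2 * √2 * h9
  have ha1 : (1 : ℝ) ≤ a1 := by exact_mod_cast ha11
  have hpos : (0 : ℝ) < a1 * 10 ^ n := mul_pos (by linarith) (by positivity)
  rw [hform, abs_div, abs_of_pos hpos, div_le_div_iff₀ hpos (by positivity)]
  calc _ ≤ 9 * (a1 : ℝ) * 10 ^ m * 10 ^ (n - m) := by
        gcongr
        exact abs_nine_mul_sub_sub_mul_le ha1 (Nat.cast_nonneg _) (by exact_mod_cast ha29)
          (one_le_pow₀ (by norm_num)) (abs_one_sub_sqrt_two_pow_div_le k)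
    _ = 9 * (a1 * 10 ^ n) := by
        rw [← Nat.sub_add_cancel hnm.le, pow_add, Nat.add_sub_cancel]; ring
    _ ≤ 9.81 * (a1 * 10 ^ n) := by gcongr; norm_num

/-- `|9 * 10^(-n) * α^k / (a1 * 2√2) - 1| ≤ 9.81 / 10^(n-m)` with `α = 1 + √2`. -/
theorem pell_linear_form_bound_one (k n m a1 a2 : ℕ) (hk : 150 ≤ k) (hnm : m < n) (hm : 1 ≤ m)
    (ha11 : 1 ≤ a1) (ha19 : a1 ≤ 9) (ha21 : 1 ≤ a2) (ha29 : a2 ≤ 9)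
    (heq : (pell k : ℤ) = (a1 : ℤ) * ((10 ^ n - 1) / 9) - (a2 : ℤ) * ((10 ^ m - 1) / 9)) :
    |9 * (10 : ℝ) ^ (-(n : ℤ)) * (1 + Real.sqrt 2) ^ k / ((a1 : ℝ) * (2 * Real.sqrt 2)) - 1| ≤
      9.81 / 10 ^ (n - m) :=
  pell_linear_form_bound_one_general k n m a1 a2 hnm ha11 ha29 heq
end
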